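/- arXiv:0712.4199 — 2 statements merged into one kernel-verified Lean document; each statement's English description precedes it below -/
import Mathlib

section
/- Suppose lim_{L→∞} ess sup_x ∫_{|f(y)| > L} |f(y)|^k P(x, dy) = 0 for an integer k ≥ 1. Then the operators P^{(m)}, 0 ≤ m ≤ k, are bounded on L^∞(μ; ℂ), and the characteristic operator admits the operator-norm MacLaurin expansion ‖ P̂(θ) − Σ_{m=0}^{k} ((iθ)^m / m!) P^{(m)} ‖ = o(|θ|^k) as θ → 0; i.e., θ ↦ P̂(θ) is k-times strongly differentiable at θ = 0 with m-th derivative i^m P^{(m)}. -/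
open MeasureTheory ProbabilityTheory Filter Complex Asymptotics
open scoped ENNReal Topology BigOperators NNReal

noncomputable section

namespace Edgeworth

variable {S : Type*} [MeasurableSpace S]

/-- Condition (Ψ): `α μ(A) ≤ P(x,A) ≤ β μ(A)` for μ-a.a. x, for every A with μ(A)>0. -/
def CondPsi (P : Kernel S S) (μ : Measure S) (α β : ℝ) : Prop :=
  ∀ A : Set S, MeasurableSet A → 0 < μ A →
    ∀ᵐ x ∂μ, α * (μ A).toReal ≤ ((P x) A).toReal ∧ ((P x) A).toReal ≤ β * (μ A).toReal

/-- π is a stationary distribution for the kernel P. -/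
def Stationary (P : Kernel S S) (π : Measure S) : Prop :=
  ∀ A : Set S, MeasurableSet A → ∫⁻ x, P x A ∂π = π A

/-- The norm ‖K‖₊ : sup of ‖K g‖ over a.e.-nonnegative (real-valued) g in the unit ball of L^∞. -/
def plusNorm {μ : Measure S} (K : Lp ℂ ⊤ μ →L[ℂ] Lp ℂ ⊤ μ) : ℝ :=
  sSup {r : ℝ | ∃ g : Lp ℂ ⊤ μ,
    (∀ᵐ x ∂μ, ∃ t : ℝ, 0 ≤ t ∧ g x = (t : ℂ)) ∧ ‖g‖ ≤ 1 ∧ r = ‖K g‖}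

/-- Iterated kernel integral: `kiter P f g c n x s = E_x[ 1{s + f(ξ₁)+⋯+f(ξₙ) < c} g(ξₙ) ]`
(with `ξ₀ = x`; for `n = 0` it is `1{s<c} g(x)`). -/
def kiter (P : Kernel S S) (f : S → ℝ) (g : S → ℂ) (c : ℝ) : ℕ → S → ℝ → ℂ
  | 0, x, s => if s < c then g x else 0
  | n+1, x, s => ∫ y, kiter P f g c n y (s + f y) ∂(P x)

/-- Iterated kernel integral for real functionals:
`eiter P f φ n x s = E_x[ φ(ξₙ, s + f(ξ₁)+⋯+f(ξₙ)) ]`. -/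
def eiter (P : Kernel S S) (f : S → ℝ) (φ : S → ℝ → ℝ) : ℕ → S → ℝ → ℝ
  | 0, x, s => φ x s
  | n+1, x, s => ∫ y, eiter P f φ n y (s + f y) ∂(P x)

/-- n-fold composition of the kernel P. -/
def kpow (P : Kernel S S) : ℕ → Kernel S S
  | 0 => Kernel.id
  | n+1 => Kernel.comp (kpow P n) P

/-- σ² = E_π[f(ξ₀)²] + 2 Σ_{n≥1} E_π[f(ξ₀) f(ξₙ)] for the stationary chain. -/
def sigmaSq (P : Kernel S S) (π : Measure S) (f : S → ℝ) : ℝ :=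
  (∫ x, f x ^ 2 ∂π) + 2 * ∑' n : ℕ, ∫ x, f x * ∫ y, f y ∂(kpow P (n + 1) x) ∂π

/-- E_π[Sₙ³], the third moment of Sₙ under the stationary initial distribution. -/
def thirdMoment (P : Kernel S S) (π : Measure S) (f : S → ℝ) (n : ℕ) : ℝ :=
  ∫ x, eiter P f (fun _ s => s ^ 3) n x 0 ∂π

/-- The standard normal density 𝔫. -/
def stdPdf (z : ℝ) : ℝ := Real.exp (-z ^ 2 / 2) / Real.sqrt (2 * Real.pi)

/-- The standard normal distribution function 𝔑. -/
def stdCdf (z : ℝ) : ℝ := ∫ u in Set.Iio z, stdPdf u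

/-- Evaluation of the k-th (probabilists') Hermite polynomial. -/
def hermiteEval (k : ℕ) (z : ℝ) : ℝ := Polynomial.aeval z (Polynomial.hermite k)

/-- The index set 𝒦_m = {(k₁,…,k_m) : Σ i kᵢ = m}, encoded with kᵢ ≤ m. -/
def Kcal (m : ℕ) : Finset (Fin m → Fin (m + 1)) :=
  Finset.univ.filter fun k => ∑ i : Fin m, ((i : ℕ) + 1) * (k i : ℕ) = m

/-- The characteristic function μ̂_f(θ) = ∫ e^{iθ f(y)} μ(dy). -/
def charFn (μ : Measure S) (f : S → ℝ) (θ : ℝ) : ℂ :=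
  ∫ y, Complex.exp (Complex.I * θ * f y) ∂μ

/-- The constant function 1 as an element of L^∞(μ;ℂ). -/
def oneL (μ : Measure S) : Lp ℂ ⊤ μ := (memLp_top_const (1 : ℂ)).toLp _

/-- The coefficient a_j(z) of the Edgeworth operator A_{ν,z}. -/
def acoef (γ : ℕ → ℝ) (σ : ℝ) (ν j : ℕ) (z : ℝ) : ℝ :=
  -(stdPdf z) * ∑ kt ∈ Kcal (ν - j),
    (1 / (j.factorial * σ ^ j)) *
      (∏ i : Fin (ν - j),
        (1 / ((kt i : ℕ).factorial : ℝ)) *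
          (γ ((i : ℕ) + 3) / (((i : ℕ) + 3).factorial * σ ^ ((i : ℕ) + 3))) ^ ((kt i : ℕ))) *
      hermiteEval (ν - 1 + 2 * ∑ i, (kt i : ℕ)) z

/-- The Edgeworth operators A_{ν,z}. -/
def Aop {μ : Measure S} (Pi : Lp ℂ ⊤ μ →L[ℂ] Lp ℂ ⊤ μ)
    (P1m : ℕ → (Lp ℂ ⊤ μ →L[ℂ] Lp ℂ ⊤ μ)) (γ : ℕ → ℝ) (σ : ℝ) :
    ℕ → ℝ → (Lp ℂ ⊤ μ →L[ℂ] Lp ℂ ⊤ μ)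
  | 0, z => (stdCdf z : ℂ) • Pi
  | ν + 1, z => ∑ j ∈ Finset.range (ν + 2), ((acoef γ σ (ν + 1) j z : ℝ) : ℂ) • P1m j

/-- 𝔓_ν(iθ), the ν-th Cramér–Edgeworth polynomial built from the cumulants γ. -/
def frakP (γ : ℕ → ℝ) (σ : ℝ) (ν : ℕ) (θ : ℝ) : ℂ :=
  ∑ kt ∈ Kcal ν,
    ∏ i : Fin ν,
      (1 / ((kt i : ℕ).factorial : ℂ)) *
        ((γ ((i : ℕ) + 3) : ℂ) * (Complex.I * θ) ^ ((i : ℕ) + 3) /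
            ((((i : ℕ) + 3).factorial : ℂ) * (σ : ℂ) ^ ((i : ℕ) + 3))) ^ ((kt i : ℕ))

/-! The Taylor remainder `R_n(t) = e^{it} - ∑_{m<n} (it)^m/m!` satisfies
`‖R_{k+1}(t)‖ ≤ |t|^{k+1}/(k+1)!` and `‖R_{k+1}(t)‖ ≤ 2|t|^k/k!`. The operator
`P̂(θ) - ∑_{m ≤ k} (iθ)^m/m! P^{(m)}` integrates `g` against `R_{k+1}(θ f(y)) P(x, dy)`, so its norm
on `L^∞` is at most `ess sup_x ∫ ‖R_{k+1}(θ f)‖ dP(x, ·)`. Split at `|f| = L`: on `{|f| ≤ L}` the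
first bound gives `|θ L|^{k+1}/(k+1)!`, on `{|f| > L}` the second gives `2|θ|^k/k!` times the tail
moment. Taking `L` with small tail moment and then `θ` small yields `≤ c |θ|^k`. The same split
bounds `ess sup_x ∫ |f|^m dP(x, ·)` for `m ≤ k`, which makes the `P^{(m)}` bounded. -/

lemma pow_le_one_add_pow {x : ℝ} (hx : 0 ≤ x) {m k : ℕ} (hmk : m ≤ k) : x ^ m ≤ 1 + x ^ k := by
  rcases le_total x 1 with h | h
  · linarith [pow_le_one₀ hx h (n := m), pow_nonneg hx k]
  · linarith [pow_le_pow_right₀ h hmk]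

def expRem (n : ℕ) (t : ℝ) : ℂ :=
  Complex.exp (I * t) - ∑ m ∈ Finset.range n, (I * t) ^ m / m.factorial

lemma expRem_zero (t : ℝ) : expRem 0 t = Complex.exp (I * t) := by
  simp [expRem]

lemma expRem_succ (n : ℕ) (t : ℝ) :
    expRem (n + 1) t = expRem n t - (I * t) ^ n / n.factorial := by
  rw [expRem, expRem, Finset.sum_range_succ, sub_add_eq_sub_sub]

lemma hasDerivAt_expRem_succ (n : ℕ) (t : ℝ) :
    HasDerivAt (expRem (n + 1)) (I * expRem n t) t := by
  have hI : HasDerivAt (fun s : ℝ => I * s) I t := by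
    simpa using ((hasDerivAt_id t).ofReal_comp).const_mul I
  have hterm (m : ℕ) : HasDerivAt (fun s : ℝ => (I * s) ^ (m + 1) / (m + 1).factorial)
      (I * ((I * t) ^ m / m.factorial)) t := by
    refine ((hI.fun_pow (m + 1)).div_const ((m + 1).factorial : ℂ)).congr_deriv ?_
    rw [Nat.add_sub_cancel, Nat.factorial_succ]
    push_cast
    field_simp
  have hshift : expRem (n + 1) = fun s : ℝ => Complex.exp (I * s) -
      (1 + ∑ m ∈ Finset.range n, (I * s) ^ (m + 1) / (m + 1).factorial) := by
    ext s
    simp [expRem, Finset.sum_range_succ', add_comm]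
  rw [hshift]
  refine (hI.cexp.sub ((hasDerivAt_const t (1 : ℂ)).add
    (HasDerivAt.fun_sum fun m _ => hterm m))).congr_deriv ?_
  rw [expRem, zero_add, mul_sub, Finset.mul_sum]
  ring

lemma norm_expRem_le (n : ℕ) (t : ℝ) : ‖expRem n t‖ ≤ |t| ^ n / n.factorial := by
  induction n generalizing t with
  | zero => simp [expRem_zero, Complex.norm_exp_I_mul_ofReal]
  | succ n ih =>
    have hcont : Continuous fun s : ℝ => I * expRem n s := by
      unfold expRem; fun_prop
    have hftc := intervalIntegral.integral_eq_sub_of_hasDerivAt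
      (fun s _ => hasDerivAt_expRem_succ n s) (hcont.intervalIntegrable 0 t)
    have hzero : expRem (n + 1) 0 = 0 := by
      simp [expRem, Finset.sum_range_succ']
    rw [hzero, sub_zero] at hftc
    rw [← hftc]
    calc ‖∫ s in (0 : ℝ)..t, I * expRem n s‖
        ≤ |∫ s in (0 : ℝ)..t, |s| ^ n / n.factorial| :=
          intervalIntegral.norm_integral_le_abs_of_norm_le
            (Eventually.of_forall fun s => by simpa using ih s)
            (((continuous_abs.pow n).div_const _).intervalIntegrable 0 t)
      _ = |t| ^ (n + 1) / (n + 1).factorial := by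
          have h := integral_pow_abs_sub_uIoc (a := 0) (b := t) (n := n)
          simp only [sub_zero] at h
          rw [intervalIntegral.abs_integral_eq_abs_integral_uIoc, integral_div, h,
            Nat.factorial_succ, abs_of_nonneg (by positivity)]
          push_cast
          field_simp

lemma norm_expRem_succ_le (n : ℕ) (t : ℝ) :
    ‖expRem (n + 1) t‖ ≤ 2 * |t| ^ n / n.factorial := by
  have hlast : ‖(I * t) ^ n / n.factorial‖ = |t| ^ n / n.factorial := by simp
  calc ‖expRem (n + 1) t‖ ≤ ‖expRem n t‖ + ‖(I * t) ^ n / n.factorial‖ := by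
        rw [expRem_succ]; exact norm_sub_le _ _
    _ ≤ |t| ^ n / n.factorial + |t| ^ n / n.factorial := by
        rw [hlast]; gcongr; exact norm_expRem_le n t
    _ = 2 * |t| ^ n / n.factorial := by ring

lemma expRem_mul (n : ℕ) (θ s : ℝ) :
    expRem n (θ * s) = Complex.exp (I * θ * s)
      - ∑ m ∈ Finset.range n, (I * θ) ^ m / m.factorial * (s : ℂ) ^ m := by
  simp only [expRem, ofReal_mul, ← mul_assoc]
  congr 1
  refine Finset.sum_congr rfl fun m _ => ?_
  ring

section KernelWeight

variable {α β : Type*} [MeasurableSpace α] [MeasurableSpace β] {ν : Measure β}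

lemma Lp.ae_norm_le_norm_top {E : Type*} [NormedAddCommGroup E] (g : Lp E ∞ ν) :
    ∀ᵐ y ∂ν, ‖g y‖ ≤ ‖g‖ := by
  have h := ae_le_lpNorm_exponent_top (Lp.memLp g)
  rwa [← toReal_eLpNorm (Lp.aestronglyMeasurable g), ← Lp.norm_def] at h

lemma Lp.norm_le_of_ae_norm_le_top {E : Type*} [NormedAddCommGroup E] {g : Lp E ∞ ν} {C : ℝ}
    (hC : 0 ≤ C) (h : ∀ᵐ y ∂ν, ‖g y‖ ≤ C) : ‖g‖ ≤ C := by
  rw [Lp.norm_def, eLpNorm_exponent_top]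
  exact ENNReal.toReal_le_of_le_ofReal hC (eLpNormEssSup_le_of_ae_bound h)

lemma lintegral_enorm_mul_le {m : Measure β} (hm : m ≪ ν) (w : β → ℂ) (g : Lp ℂ ∞ ν) :
    ∫⁻ y, ‖w y * g y‖ₑ ∂m ≤ (∫⁻ y, ‖w y‖ₑ ∂m) * ENNReal.ofReal ‖g‖ := by
  calc ∫⁻ y, ‖w y * g y‖ₑ ∂m ≤ ∫⁻ y, ‖w y‖ₑ * ENNReal.ofReal ‖g‖ ∂m := by
        have hg : ∀ᵐ y ∂m, ‖g y‖ ≤ ‖g‖ := hm.ae_le (Lp.ae_norm_le_norm_top g)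
        refine lintegral_mono_ae (hg.mono fun y hy => ?_)
        rw [enorm_mul, ← ofReal_norm (g y)]
        gcongr
    _ = (∫⁻ y, ‖w y‖ₑ ∂m) * ENNReal.ofReal ‖g‖ := lintegral_mul_const' _ _ (by simp)

lemma integrable_mul_Lp_top {m : Measure β} (hm : m ≪ ν) {w : β → ℂ}
    (hw : AEStronglyMeasurable w m) (hw' : ∫⁻ y, ‖w y‖ₑ ∂m ≠ ∞) (g : Lp ℂ ∞ ν) :
    Integrable (fun y => w y * g y) m :=
  ⟨hw.mul ((Lp.aestronglyMeasurable g).mono_ac hm),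
    (lintegral_enorm_mul_le hm w g).trans_lt (ENNReal.mul_lt_top hw'.lt_top (by simp))⟩

lemma norm_integral_mul_Lp_top_le {m : Measure β} (hm : m ≪ ν) {w : β → ℂ} {C : ℝ}
    (hC : 0 ≤ C) (hw : ∫⁻ y, ‖w y‖ₑ ∂m ≤ ENNReal.ofReal C) (g : Lp ℂ ∞ ν) :
    ‖∫ y, w y * g y ∂m‖ ≤ C * ‖g‖ := by
  refine (norm_integral_le_lintegral_norm _).trans (ENNReal.toReal_le_of_le_ofReal
    (by positivity) ?_)
  simp_rw [ofReal_norm]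
  calc ∫⁻ y, ‖w y * g y‖ₑ ∂m ≤ (∫⁻ y, ‖w y‖ₑ ∂m) * ENNReal.ofReal ‖g‖ :=
        lintegral_enorm_mul_le hm w g
    _ ≤ ENNReal.ofReal C * ENNReal.ofReal ‖g‖ := by gcongr
    _ = ENNReal.ofReal (C * ‖g‖) := (ENNReal.ofReal_mul hC).symm

lemma exists_clm_ae_eq_integral_mul {μ : Measure α} {P : Kernel α β} [IsSFiniteKernel P]
    (habs : ∀ x, P x ≪ ν) {w : β → ℂ} (hw : Measurable w) {C : ℝ} (hC : 0 ≤ C)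
    (hbound : ∀ᵐ x ∂μ, ∫⁻ y, ‖w y‖ₑ ∂P x ≤ ENNReal.ofReal C) :
    ∃ T : Lp ℂ ∞ ν →L[ℂ] Lp ℂ ∞ μ,
      ∀ g, ∀ᵐ x ∂μ, T g x = ∫ y, w y * g y ∂P x := by
  set F : Lp ℂ ∞ ν → α → ℂ := fun g x => ∫ y, w y * g y ∂P x
  have hint (g : Lp ℂ ∞ ν) : ∀ᵐ x ∂μ, Integrable (fun y => w y * g y) (P x) :=
    hbound.mono fun x hx => integrable_mul_Lp_top (habs x) hw.aestronglyMeasurable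
      (ne_top_of_le_ne_top ENNReal.ofReal_ne_top hx) g
  have hnorm (g : Lp ℂ ∞ ν) : ∀ᵐ x ∂μ, ‖F g x‖ ≤ C * ‖g‖ :=
    hbound.mono fun x hx => norm_integral_mul_Lp_top_le (habs x) hC hx g
  have hmem (g : Lp ℂ ∞ ν) : MemLp (F g) ∞ μ := by
    refine memLp_top_of_bound (StronglyMeasurable.integral_kernel_prod_right'
      (f := fun p : α × β => w p.2 * g p.2) ?_).aestronglyMeasurable _ (hnorm g)
    exact (hw.stronglyMeasurable.mul (Lp.stronglyMeasurable g)).comp_measurable measurable_snd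
  have hcongr {g : Lp ℂ ∞ ν} {h : β → ℂ} (x : α) (hgh : (g : β → ℂ) =ᵐ[ν] h) :
      F g x = ∫ y, w y * h y ∂P x :=
    integral_congr_ae <| Filter.EventuallyEq.mul .rfl ((habs x).ae_le hgh)
  let T : Lp ℂ ∞ ν →ₗ[ℂ] Lp ℂ ∞ μ :=
    { toFun g := (hmem g).toLp (F g)
      map_add' g h := by
        rw [← MemLp.toLp_add]
        refine MemLp.toLp_congr _ _ ?_
        filter_upwards [hint g, hint h] with x hg hh
        rw [Pi.add_apply, hcongr x (Lp.coeFn_add g h), ← integral_add hg hh]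
        simp only [Pi.add_apply, mul_add]
      map_smul' c g := by
        rw [← MemLp.toLp_const_smul]
        refine MemLp.toLp_congr _ _ ?_
        filter_upwards with x
        rw [Pi.smul_apply, hcongr x (Lp.coeFn_smul c g), ← integral_smul]
        simp only [Pi.smul_apply, smul_eq_mul, RingHom.id_apply, mul_left_comm] }
  refine ⟨T.mkContinuousOfExistsBound ⟨C, fun g => ?_⟩, fun g => MemLp.coeFn_toLp (hmem g)⟩
  refine Lp.norm_le_of_ae_norm_le_top (by positivity) ?_
  filter_upwards [MemLp.coeFn_toLp (hmem g), hnorm g] with x hx hFx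
  exact hx ▸ hFx

lemma lintegral_le_add_mul_setLIntegral {m : Measure β} [IsProbabilityMeasure m] {A : Set β}
    (hA : MeasurableSet A) {h g : β → ℝ≥0∞} {a b : ℝ≥0∞} (hb : b ≠ ∞)
    (hout : ∀ y ∉ A, h y ≤ a) (hin : ∀ y ∈ A, h y ≤ b * g y) :
    ∫⁻ y, h y ∂m ≤ a + b * ∫⁻ y in A, g y ∂m := by
  calc ∫⁻ y, h y ∂m ≤ ∫⁻ y, a + A.indicator (fun y => b * g y) y ∂m := by
        refine lintegral_mono fun y => ?_
        by_cases hy : y ∈ A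
        · simpa [hy] using (hin y hy).trans le_add_self
        · simpa [hy] using hout y hy
    _ = a + b * ∫⁻ y in A, g y ∂m := by
        rw [lintegral_add_left measurable_const, lintegral_const, measure_univ, mul_one,
          lintegral_indicator hA, lintegral_const_mul' _ _ hb]

lemma eventually_ae_le_of_tendsto_essSup {ι : Type*} {l : Filter ι} {μ : Measure α}
    {F : ι → α → ℝ≥0∞} (h : Tendsto (fun i => essSup (F i) μ) l (𝓝 0)) {ε : ℝ≥0∞}
    (hε : 0 < ε) : ∀ᶠ i in l, ∀ᵐ x ∂μ, F i x ≤ ε :=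
  (h.eventually_lt_const hε).mono fun i hi =>
    (ENNReal.ae_le_essSup (F i)).mono fun _ hx => hx.trans hi.le

end KernelWeight

section Expansion

variable {α β : Type*} [MeasurableSpace α] [MeasurableSpace β]
  {P : Kernel α β} [IsFiniteKernel P] {f : β → ℝ} {μ : Measure α}

lemma integral_expRem_mul {m : Measure β} {g : β → ℂ} (n : ℕ) (θ : ℝ)
    (hexp : Integrable (fun y => Complex.exp (I * θ * f y) * g y) m)
    (hpow : ∀ j ∈ Finset.range n, Integrable (fun y => (f y : ℂ) ^ j * g y) m) :
    ∫ y, expRem n (θ * f y) * g y ∂m = ∫ y, Complex.exp (I * θ * f y) * g y ∂m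
      - ∑ j ∈ Finset.range n, (I * θ) ^ j / j.factorial * ∫ y, (f y : ℂ) ^ j * g y ∂m := by
  have hterm (j : ℕ) (hj : j ∈ Finset.range n) :
      Integrable (fun y => (I * θ) ^ j / j.factorial * (f y : ℂ) ^ j * g y) m := by
    simpa only [mul_assoc] using (hpow j hj).const_mul ((I * θ) ^ j / j.factorial)
  simp_rw [expRem_mul, sub_mul, Finset.sum_mul]
  rw [integral_sub hexp (integrable_finsetSum _ hterm), integral_finsetSum _ hterm]
  simp_rw [mul_assoc, integral_const_mul]

lemma ae_eq_integral_expRem_mul {ν : Measure β} (habs : ∀ x, P x ≪ ν) (hf : Measurable f)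
    {A : Lp ℂ ∞ ν →L[ℂ] Lp ℂ ∞ μ} {B : ℕ → Lp ℂ ∞ ν →L[ℂ] Lp ℂ ∞ μ} {n : ℕ} {θ : ℝ}
    {g : Lp ℂ ∞ ν} (hA : ∀ᵐ x ∂μ, A g x = ∫ y, Complex.exp (I * θ * f y) * g y ∂P x)
    (hB : ∀ j ∈ Finset.range n, ∀ᵐ x ∂μ, B j g x = ∫ y, (f y : ℂ) ^ j * g y ∂P x)
    (hpow : ∀ j ∈ Finset.range n, ∀ᵐ x ∂μ, Integrable (fun y => (f y : ℂ) ^ j * g y) (P x)) :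
    ∀ᵐ x ∂μ, (A - ∑ j ∈ Finset.range n, ((I * θ) ^ j / j.factorial) • B j) g x
      = ∫ y, expRem n (θ * f y) * g y ∂P x := by
  have hexp (x : α) : Integrable (fun y => Complex.exp (I * θ * f y) * g y) (P x) := by
    refine integrable_mul_Lp_top (habs x) (by fun_prop) ?_ g
    have hunit (y : β) : ‖Complex.exp (I * θ * f y)‖ₑ = 1 := by
      rw [mul_assoc, ← ofReal_mul, ← enorm_norm, Complex.norm_exp_I_mul_ofReal, enorm_one]
    simp [hunit]
  have hsum : ∀ᵐ x ∂μ, (∑ j ∈ Finset.range n, ((I * θ) ^ j / j.factorial) • B j) g x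
      = ∑ j ∈ Finset.range n, (I * θ) ^ j / j.factorial * B j g x := by
    simp only [sum_apply, smul_apply]
    filter_upwards [Lp.coeFn_fun_finsetSum (Finset.range n)
        fun j => ((I * θ) ^ j / j.factorial) • B j g,
      (eventually_all_finset _).2 fun j (_ : j ∈ Finset.range n) =>
        Lp.coeFn_smul ((I * θ) ^ j / j.factorial) (B j g)] with x hx hsmul
    rw [hx]
    exact Finset.sum_congr rfl fun j hj => hsmul j hj
  filter_upwards [Lp.coeFn_sub (A g) _, hA, hsum, (eventually_all_finset _).2 hB,
    (eventually_all_finset _).2 hpow] with x hsub hAx hsumx hBx hpowx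
  rw [sub_apply, hsub, Pi.sub_apply, hAx, hsumx,
    integral_expRem_mul n θ (hexp x) hpowx]
  exact congrArg _ (Finset.sum_congr rfl fun j hj => by rw [hBx j hj])

lemma opNorm_sub_sum_smul_le {ν : Measure β} (habs : ∀ x, P x ≪ ν) (hf : Measurable f)
    {A : Lp ℂ ∞ ν →L[ℂ] Lp ℂ ∞ μ} {B : ℕ → Lp ℂ ∞ ν →L[ℂ] Lp ℂ ∞ μ} {n : ℕ} {θ D : ℝ}
    (hD : 0 ≤ D)
    (hA : ∀ g : Lp ℂ ∞ ν, ∀ᵐ x ∂μ, A g x = ∫ y, Complex.exp (I * θ * f y) * g y ∂P x)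
    (hB : ∀ j ∈ Finset.range n, ∀ g : Lp ℂ ∞ ν, ∀ᵐ x ∂μ,
      B j g x = ∫ y, (f y : ℂ) ^ j * g y ∂P x)
    (hpow : ∀ j ∈ Finset.range n, ∀ᵐ x ∂μ, ∫⁻ y, ‖(f y : ℂ) ^ j‖ₑ ∂P x ≠ ∞)
    (hrem : ∀ᵐ x ∂μ, ∫⁻ y, ‖expRem n (θ * f y)‖ₑ ∂P x ≤ ENNReal.ofReal D) :
    ‖A - ∑ j ∈ Finset.range n, ((I * θ) ^ j / j.factorial) • B j‖ ≤ D := by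
  refine ContinuousLinearMap.opNorm_le_bound _ hD fun g => ?_
  have hint (j : ℕ) (hj : j ∈ Finset.range n) :
      ∀ᵐ x ∂μ, Integrable (fun y => (f y : ℂ) ^ j * g y) (P x) :=
    (hpow j hj).mono fun x hx => integrable_mul_Lp_top (habs x) (by fun_prop) hx g
  refine Lp.norm_le_of_ae_norm_le_top (by positivity) ?_
  filter_upwards [ae_eq_integral_expRem_mul habs hf (hA g) (fun j hj => hB j hj g) hint, hrem]
    with x hx hremx
  rw [hx]
  exact norm_integral_mul_Lp_top_le (habs x) hD hremx g

end Expansion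

section TailMoment

variable {α β : Type*} [MeasurableSpace α] [MeasurableSpace β]
  {P : Kernel α β} [IsMarkovKernel P] {f : β → ℝ} {k : ℕ} {μ : Measure α}

def tailMoment (P : Kernel α β) (f : β → ℝ) (k : ℕ) (L : ℝ) (x : α) : ℝ≥0∞ :=
  ∫⁻ y in {y | L < |f y|}, ENNReal.ofReal (|f y| ^ k) ∂P x

lemma lintegral_enorm_pow_le (hf : Measurable f) {m : ℕ} (hmk : m ≤ k) {L : ℝ} (hL : 1 ≤ L)
    (x : α) :
    ∫⁻ y, ‖(f y : ℂ) ^ m‖ₑ ∂P x ≤ ENNReal.ofReal (1 + L ^ k) + tailMoment P f k L x := by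
  have henorm (y : β) : ‖(f y : ℂ) ^ m‖ₑ = ENNReal.ofReal (|f y| ^ m) := by
    rw [← ofReal_norm]; simp
  rw [← one_mul (tailMoment P f k L x)]
  refine lintegral_le_add_mul_setLIntegral (measurableSet_lt measurable_const hf.abs)
    ENNReal.one_ne_top (fun y hy => ?_) (fun y hy => ?_)
  · have hy : |f y| ≤ L := not_lt.1 hy
    rw [henorm]
    exact ENNReal.ofReal_le_ofReal ((pow_le_one_add_pow (abs_nonneg _) hmk).trans (by gcongr))
  · rw [henorm, one_mul]
    exact ENNReal.ofReal_le_ofReal (pow_le_pow_right₀ (hL.trans hy.le) hmk)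

lemma lintegral_enorm_expRem_le (hf : Measurable f) {L : ℝ} (hL : 0 ≤ L) (θ : ℝ) (x : α) :
    ∫⁻ y, ‖expRem (k + 1) (θ * f y)‖ₑ ∂P x
      ≤ ENNReal.ofReal (|θ * L| ^ (k + 1) / (k + 1).factorial)
        + ENNReal.ofReal (2 * |θ| ^ k / k.factorial) * tailMoment P f k L x := by
  refine lintegral_le_add_mul_setLIntegral (measurableSet_lt measurable_const hf.abs)
    ENNReal.ofReal_ne_top (fun y hy => ?_) (fun y hy => ?_)
  · rw [← ofReal_norm]
    refine ENNReal.ofReal_le_ofReal ((norm_expRem_le _ _).trans ?_)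
    have hy : |f y| ≤ L := not_lt.1 hy
    rw [abs_mul, abs_mul, abs_of_nonneg hL]
    gcongr
  · rw [← ofReal_norm, ← ENNReal.ofReal_mul (by positivity)]
    refine ENNReal.ofReal_le_ofReal ((norm_expRem_succ_le _ _).trans_eq ?_)
    rw [abs_mul, mul_pow]
    ring

lemma exists_ae_lintegral_enorm_pow_le (hf : Measurable f)
    (hmom : Tendsto (fun L => essSup (tailMoment P f k L) μ) atTop (𝓝 0)) :
    ∃ C : ℝ, 0 ≤ C ∧ ∀ m ≤ k, ∀ᵐ x ∂μ, ∫⁻ y, ‖(f y : ℂ) ^ m‖ₑ ∂P x ≤ ENNReal.ofReal C := by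
  obtain ⟨L, hL, htail⟩ :=
    ((eventually_ge_atTop 1).and (eventually_ae_le_of_tendsto_essSup hmom one_pos)).exists
  refine ⟨1 + L ^ k + 1, by positivity, fun m hm => htail.mono fun x hx => ?_⟩
  calc ∫⁻ y, ‖(f y : ℂ) ^ m‖ₑ ∂P x
      ≤ ENNReal.ofReal (1 + L ^ k) + tailMoment P f k L x := lintegral_enorm_pow_le hf hm hL x
    _ ≤ ENNReal.ofReal (1 + L ^ k) + ENNReal.ofReal 1 := by rw [ENNReal.ofReal_one]; gcongr
    _ = ENNReal.ofReal (1 + L ^ k + 1) := (ENNReal.ofReal_add (by positivity) zero_le_one).symm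

lemma eventually_ae_lintegral_enorm_expRem_le (hf : Measurable f)
    (hmom : Tendsto (fun L => essSup (tailMoment P f k L) μ) atTop (𝓝 0)) {c : ℝ} (hc : 0 < c) :
    ∀ᶠ θ in 𝓝 (0 : ℝ), ∀ᵐ x ∂μ,
      ∫⁻ y, ‖expRem (k + 1) (θ * f y)‖ₑ ∂P x ≤ ENNReal.ofReal (c * |θ| ^ k) := by
  have hk : (0 : ℝ) < k.factorial := by positivity
  obtain ⟨L, hL, htail⟩ := ((eventually_ge_atTop 0).and (eventually_ae_le_of_tendsto_essSup
    hmom (ENNReal.ofReal_pos.2 (by positivity : 0 < c * k.factorial / 4)))).exists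
  have hsmall : ∀ᶠ θ in 𝓝 (0 : ℝ), |θ| * (L ^ (k + 1) / (k + 1).factorial) ≤ c / 2 := by
    have h0 : Tendsto (fun θ : ℝ => |θ| * (L ^ (k + 1) / (k + 1).factorial)) (𝓝 0) (𝓝 0) := by
      simpa using (continuous_abs.tendsto (0 : ℝ)).mul_const (L ^ (k + 1) / (k + 1).factorial)
    exact h0.eventually (ge_mem_nhds (half_pos hc))
  filter_upwards [hsmall] with θ hθ
  filter_upwards [htail] with x hx
  have hnear : |θ * L| ^ (k + 1) / (k + 1).factorial ≤ c / 2 * |θ| ^ k := by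
    rw [abs_mul, abs_of_nonneg hL, mul_pow, pow_succ]
    calc |θ| ^ k * |θ| * L ^ (k + 1) / (k + 1).factorial
        = |θ| ^ k * (|θ| * (L ^ (k + 1) / (k + 1).factorial)) := by ring
      _ ≤ c / 2 * |θ| ^ k := by rw [mul_comm (c / 2)]; gcongr
  calc ∫⁻ y, ‖expRem (k + 1) (θ * f y)‖ₑ ∂P x
      ≤ ENNReal.ofReal (|θ * L| ^ (k + 1) / (k + 1).factorial)
        + ENNReal.ofReal (2 * |θ| ^ k / k.factorial) * tailMoment P f k L x :=
        lintegral_enorm_expRem_le hf hL θ x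
    _ ≤ ENNReal.ofReal (c / 2 * |θ| ^ k)
        + ENNReal.ofReal (2 * |θ| ^ k / k.factorial) * ENNReal.ofReal (c * k.factorial / 4) := by
        gcongr
    _ = ENNReal.ofReal (c * |θ| ^ k) := by
        rw [← ENNReal.ofReal_mul (by positivity), ← ENNReal.ofReal_add (by positivity)
          (by positivity)]
        congr 1
        field_simp
        ring

end TailMoment

theorem charOp_macLaurin_general
    {S : Type*} [MeasurableSpace S] (μ : Measure S)
    (P : Kernel S S) [IsMarkovKernel P] (f : S → ℝ) (hf : Measurable f)
    (habs : ∀ x, P x ≪ μ)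
    (k : ℕ)
    (Phat : ℝ → (Lp ℂ ⊤ μ →L[ℂ] Lp ℂ ⊤ μ))
    (hPhat : ∀ (θ : ℝ) (g : Lp ℂ ⊤ μ), ∀ᵐ x ∂μ,
      Phat θ g x = ∫ y, Complex.exp (Complex.I * θ * f y) * g y ∂(P x))
    (hmom : Tendsto
      (fun L : ℝ =>
        essSup (fun x => ∫⁻ y in {y | L < |f y|}, ENNReal.ofReal (|f y| ^ k) ∂(P x)) μ)
      atTop (𝓝 0)) :
    ∃ Pm : ℕ → (Lp ℂ ⊤ μ →L[ℂ] Lp ℂ ⊤ μ),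
      (∀ m : ℕ, m ≤ k → ∀ g : Lp ℂ ⊤ μ, ∀ᵐ x ∂μ,
        Pm m g x = ∫ y, (f y : ℂ) ^ m * g y ∂(P x)) ∧
      (fun θ : ℝ =>
          Phat θ - ∑ m ∈ Finset.range (k + 1),
            (((Complex.I * θ) ^ m / (m.factorial : ℂ)) • Pm m))
        =o[𝓝 0] fun θ : ℝ => |θ| ^ k := by
  change Tendsto (fun L => essSup (tailMoment P f k L) μ) atTop (𝓝 0) at hmom
  obtain ⟨C, hC, hmoment⟩ := exists_ae_lintegral_enorm_pow_le hf hmom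
  choose T hT using fun m (hm : m ≤ k) =>
    exists_clm_ae_eq_integral_mul habs (by fun_prop) hC (hmoment m hm)
  let Pm (m : ℕ) : Lp ℂ ⊤ μ →L[ℂ] Lp ℂ ⊤ μ := if hm : m ≤ k then T m hm else 0
  have hPm (m : ℕ) (hm : m ∈ Finset.range (k + 1)) (g : Lp ℂ ⊤ μ) :
      ∀ᵐ x ∂μ, Pm m g x = ∫ y, (f y : ℂ) ^ m * g y ∂(P x) := by
    have hm : m ≤ k := Nat.lt_succ_iff.1 (Finset.mem_range.1 hm)
    simpa only [Pm, dif_pos hm] using hT m hm g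
  refine ⟨Pm, fun m hm => hPm m (Finset.mem_range.2 (Nat.lt_succ_of_le hm)), ?_⟩
  refine isLittleO_iff.2 fun c hc => ?_
  filter_upwards [eventually_ae_lintegral_enorm_expRem_le hf hmom hc] with θ hθ
  rw [norm_pow, Real.norm_eq_abs, abs_abs]
  refine opNorm_sub_sum_smul_le habs hf (by positivity) (hPhat θ) hPm (fun m hm => ?_) hθ
  exact (hmoment m (Nat.lt_succ_iff.1 (Finset.mem_range.1 hm))).mono fun x hx =>
    ne_top_of_le_ne_top ENNReal.ofReal_ne_top hx

/-- the uniform tail-moment condition implies that the operators P^{(m)}, 0 ≤ m ≤ k,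
are bounded and that the characteristic operator admits an operator-norm MacLaurin expansion of
order k at θ = 0. -/
theorem charOp_macLaurin
    {S : Type*} [MeasurableSpace S] (μ : Measure S) [IsProbabilityMeasure μ]
    (P : Kernel S S) [IsMarkovKernel P] (f : S → ℝ) (hf : Measurable f)
    (habs : ∀ x, P x ≪ μ)
    (k : ℕ) (hk : 1 ≤ k)
    (Phat : ℝ → (Lp ℂ ⊤ μ →L[ℂ] Lp ℂ ⊤ μ))
    (hPhat : ∀ (θ : ℝ) (g : Lp ℂ ⊤ μ), ∀ᵐ x ∂μ,
      Phat θ g x = ∫ y, Complex.exp (Complex.I * θ * f y) * g y ∂(P x))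
    (hmom : Tendsto
      (fun L : ℝ =>
        essSup (fun x => ∫⁻ y in {y | L < |f y|}, ENNReal.ofReal (|f y| ^ k) ∂(P x)) μ)
      atTop (𝓝 0)) :
    ∃ Pm : ℕ → (Lp ℂ ⊤ μ →L[ℂ] Lp ℂ ⊤ μ),
      (∀ m : ℕ, m ≤ k → ∀ g : Lp ℂ ⊤ μ, ∀ᵐ x ∂μ,
        Pm m g x = ∫ y, (f y : ℂ) ^ m * g y ∂(P x)) ∧
      (fun θ : ℝ =>
          Phat θ - ∑ m ∈ Finset.range (k + 1),
            (((Complex.I * θ) ^ m / (m.factorial : ℂ)) • Pm m))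
        =o[𝓝 0] fun θ : ℝ => |θ| ^ k :=
  charOp_macLaurin_general μ P f hf habs k Phat hPhat hmom

end Edgeworth
end
end

section
/- Suppose P is primitive, ‖P̂(θ) − Σ_{m=0}^{k} ((iθ)^m/m!) P^{(m)}‖ = o(|θ|^k) with all P^{(m)} bounded, and let λ^{(m)} and P̂₁^{(m)} denote the coefficients in the expansions λ(θ) = Σ_{m=0}^k ((iθ)^m/m!) λ^{(m)} + o(|θ|^k) and P̂₁(θ) = Σ_{m=0}^k ((iθ)^m/m!) P̂₁^{(m)} + o(|θ|^k), and set λ̂^{(ν)} := ∫ (P̂₁^{(ν)} 𝟙) dπ. If λ^{(0)} = λ̂^{(0)} = 1 and λ^{(1)} = λ̂^{(1)} = 0, then for every 2 ≤ m ≤ k the moments satisfy the recursion λ^{(m)} = Σ_{ν=1}^{m} C(m,ν) ∫ (P^{(ν)} P̂₁^{(m−ν)} 𝟙) dπ − Σ_{ν=2}^{m−2} C(m,ν) λ^{(ν)} λ̂^{(m−ν)}, where C(m,ν) is the binomial coefficient. -/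
/-!
Apply the functional `g ↦ π(g)` to the eigen-relation `P̂(θ) P̂₁(θ) 𝟙 = λ(θ) P̂₁(θ) 𝟙`.
By the Leibniz rule both sides have expansions to order `k` in the weights `(iθ)^m / m!`,
with `m`-th coefficients `Σ_ν C(m,ν) π(P^{(ν)} P̂₁^{(m-ν)} 𝟙)` and `Σ_ν C(m,ν) λ^{(ν)} λ̂^{(m-ν)}`,
and such expansions are unique. Primitivity gives `Π P = Π`, hence `πP = π`, so the `ν = 0` term on
the left is `λ̂^{(m)}` and cancels the `ν = 0` term on the right; the normalisations remove the
terms `ν = 1` and `ν = m - 1` and turn the term `ν = m` into `λ^{(m)}`.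
-/

open MeasureTheory ProbabilityTheory Filter Complex Asymptotics
open scoped ENNReal Topology BigOperators NNReal

noncomputable section

namespace Edgeworth

variable {S : Type*} [MeasurableSpace S]

open Finset

section MomentExpansion

variable {E F G : Type*} [NormedAddCommGroup E] [NormedSpace ℂ E]
  [NormedAddCommGroup F] [NormedSpace ℂ F] [NormedAddCommGroup G] [NormedSpace ℂ G]

def momentWeight (n : ℕ) (θ : ℝ) : ℂ := (Complex.I * θ) ^ n / n.factorial

def HasMomentExpansion (u : ℝ → E) (a : ℕ → E) (k : ℕ) : Prop :=
  (fun θ : ℝ => u θ - ∑ m ∈ range (k + 1), momentWeight m θ • a m) =o[𝓝 0]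
    fun θ : ℝ => |θ| ^ k

lemma norm_momentWeight (n : ℕ) (θ : ℝ) : ‖momentWeight n θ‖ = |θ| ^ n / n.factorial := by
  simp [momentWeight]

lemma momentWeight_mul_momentWeight (i j : ℕ) (θ : ℝ) :
    momentWeight i θ * momentWeight j θ = ((i + j).choose i : ℂ) * momentWeight (i + j) θ := by
  have hfac : ((i + j).choose i : ℂ) * i.factorial * j.factorial = (i + j).factorial := by
    rw [Nat.choose_symm_add]
    exact_mod_cast Nat.add_choose_mul_factorial_mul_factorial i j
  have hchoose : ((i + j).choose i : ℂ) ≠ 0 :=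
    mod_cast (Nat.choose_pos (Nat.le_add_right i j)).ne'
  simp only [momentWeight, ← hfac, pow_add]
  field_simp

lemma continuous_sum_momentWeight_smul (a : ℕ → E) (k : ℕ) :
    Continuous fun θ : ℝ => ∑ m ∈ range (k + 1), momentWeight m θ • a m := by
  unfold momentWeight
  fun_prop

lemma isLittleO_momentWeight_smul {i j : ℕ} (hji : j < i) (v : E) :
    (fun θ : ℝ => momentWeight i θ • v) =o[𝓝 0] fun θ : ℝ => |θ| ^ j := by
  have hpow : (fun θ : ℝ => |θ| ^ i) =o[𝓝 0] fun θ : ℝ => |θ| ^ j := by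
    simpa only [Real.norm_eq_abs] using isLittleO_norm_pow_norm_pow (E' := ℝ) hji
  refine (IsBigO.of_bound ‖v‖ (Eventually.of_forall fun θ => ?_)).trans_isLittleO hpow
  rw [norm_smul, norm_momentWeight, norm_pow, Real.norm_eq_abs, abs_abs, mul_comm]
  gcongr
  exact div_le_self (by positivity) (mod_cast Nat.one_le_iff_ne_zero.mpr i.factorial_ne_zero)

lemma eq_zero_of_momentWeight_smul_isLittleO {n : ℕ} {v : E}
    (h : (fun θ : ℝ => momentWeight n θ • v) =o[𝓝 0] fun θ : ℝ => |θ| ^ n) : v = 0 := by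
  by_contra hv
  have hc : ‖v‖ / n.factorial ≠ 0 := by positivity
  have h' : (fun θ : ℝ => ‖v‖ / n.factorial * |θ| ^ n) =o[𝓝 0] fun θ : ℝ => |θ| ^ n :=
    h.norm_left.congr_left fun θ => by rw [norm_smul, norm_momentWeight]; ring
  have hne : ∃ᶠ θ : ℝ in 𝓝 0, |θ| ^ n ≠ 0 :=
    ((eventually_mem_nhdsWithin (s := {0}ᶜ) (a := (0 : ℝ))).frequently.filter_mono
      nhdsWithin_le_nhds).mono fun θ hθ => pow_ne_zero n (abs_ne_zero.mpr hθ)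
  exact isLittleO_irrefl hne ((isLittleO_const_mul_left_iff hc).mp h')

/- The products with `i + j ≤ k` regroup into the Leibniz coefficients (`sum_range_diag_flip`);
those with `i + j > k` are `o(|θ|^k)`. -/
lemma bilinear_sum_momentWeight_smul (B : E →L[ℂ] F →L[ℂ] G) (a : ℕ → E) (b : ℕ → F)
    (k : ℕ) :
    (fun θ : ℝ => B (∑ i ∈ range (k + 1), momentWeight i θ • a i)
          (∑ j ∈ range (k + 1), momentWeight j θ • b j) -
        ∑ m ∈ range (k + 1), momentWeight m θ •
          ∑ ν ∈ range (m + 1), (m.choose ν : ℂ) • B (a ν) (b (m - ν)))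
      =o[𝓝 0] fun θ : ℝ => |θ| ^ k := by
  set c : ℕ → ℕ → ℝ → G := fun i j θ =>
    momentWeight (i + j) θ • (((i + j).choose i : ℂ) • B (a i) (b j))
  have hprod : ∀ θ, B (∑ i ∈ range (k + 1), momentWeight i θ • a i)
      (∑ j ∈ range (k + 1), momentWeight j θ • b j) =
        ∑ i ∈ range (k + 1), ∑ j ∈ range (k + 1), c i j θ := fun θ => by
    simp only [map_sum, map_smul, _root_.sum_apply, _root_.smul_apply, smul_sum, smul_smul]
    rw [sum_comm]
    refine sum_congr rfl fun i _ => sum_congr rfl fun j _ => ?_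
    rw [mul_comm (momentWeight j θ), momentWeight_mul_momentWeight, mul_comm, mul_smul]
  have hlow : ∀ θ, ∑ m ∈ range (k + 1), momentWeight m θ •
      ∑ ν ∈ range (m + 1), (m.choose ν : ℂ) • B (a ν) (b (m - ν)) =
        ∑ i ∈ range (k + 1), ∑ j ∈ range (k + 1 - i), c i j θ := fun θ => by
    rw [← sum_range_diag_flip]
    refine sum_congr rfl fun m _ => ?_
    rw [smul_sum]
    refine sum_congr rfl fun ν hν => ?_
    simp only [c, Nat.add_sub_cancel' (Nat.lt_succ_iff.mp (mem_range.mp hν))]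
  have hhigh : (fun θ => ∑ i ∈ range (k + 1), ∑ j ∈ Ico (k + 1 - i) (k + 1), c i j θ)
      =o[𝓝 0] fun θ : ℝ => |θ| ^ k :=
    IsLittleO.fun_sum fun i hi => IsLittleO.fun_sum fun j hj =>
      isLittleO_momentWeight_smul (by simp only [mem_Ico, mem_range] at hi hj; omega) _
  refine hhigh.congr_left fun θ => ?_
  rw [hprod, hlow, ← sum_sub_distrib]
  refine sum_congr rfl fun i _ => ?_
  rw [← sum_range_add_sum_Ico _ (Nat.sub_le (k + 1) i), add_sub_cancel_left]

namespace HasMomentExpansion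

variable {u v : ℝ → E} {a b : ℕ → E} {k : ℕ}

lemma congr_of_eventuallyEq (h : HasMomentExpansion u a k) (huv : u =ᶠ[𝓝 0] v) :
    HasMomentExpansion v a k :=
  IsLittleO.congr' h (huv.sub EventuallyEq.rfl) EventuallyEq.rfl

lemma sub (hu : HasMomentExpansion u a k) (hv : HasMomentExpansion v b k) :
    HasMomentExpansion (u - v) (a - b) k :=
  (IsLittleO.sub hu hv).congr_left fun θ => by
    simp only [Pi.sub_apply, smul_sub, sum_sub_distrib]
    abel

lemma map (L : E →L[ℂ] F) (h : HasMomentExpansion u a k) :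
    HasMomentExpansion (fun θ => L (u θ)) (fun m => L (a m)) k :=
  ((L.isBigO_comp _ _).trans_isLittleO h).congr_left fun θ => by
    simp only [map_sub, map_sum, map_smul]

lemma isBigO_one (h : HasMomentExpansion u a k) : u =O[𝓝 0] fun _ => (1 : ℝ) := by
  have hpow : (fun θ : ℝ => |θ| ^ k) =O[𝓝 0] fun _ => (1 : ℝ) :=
    ((continuous_abs.pow k).tendsto 0).isBigO_one ℝ
  exact ((IsLittleO.isBigO h).trans hpow |>.add
    (((continuous_sum_momentWeight_smul a k).tendsto 0).isBigO_one ℝ)).congr_left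
      fun θ => sub_add_cancel _ _

lemma mono (h : HasMomentExpansion u a k) {j : ℕ} (hjk : j ≤ k) : HasMomentExpansion u a j := by
  have hpow : (fun θ : ℝ => |θ| ^ k) =O[𝓝 0] fun θ : ℝ => |θ| ^ j := by
    have hrest : (fun θ : ℝ => |θ| ^ (k - j)) =O[𝓝 0] fun _ => (1 : ℝ) :=
      ((continuous_abs.pow (k - j)).tendsto 0).isBigO_one ℝ
    simpa only [← pow_add, mul_one, Nat.add_sub_cancel' hjk] using
      (isBigO_refl (fun θ : ℝ => |θ| ^ j) _).mul hrest
  have htail : (fun θ => ∑ m ∈ Ico (j + 1) (k + 1), momentWeight m θ • a m)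
      =o[𝓝 0] fun θ : ℝ => |θ| ^ j :=
    IsLittleO.fun_sum fun m hm =>
      isLittleO_momentWeight_smul (by simp only [mem_Ico] at hm; omega) _
  refine ((IsLittleO.trans_isBigO h hpow).add htail).congr_left fun θ => ?_
  rw [← sum_range_add_sum_Ico _ (by omega : j + 1 ≤ k + 1)]
  abel

lemma coeff_eq_zero (h : HasMomentExpansion (0 : ℝ → E) a k) {m : ℕ} (hm : m ≤ k) :
    a m = 0 := by
  induction m using Nat.strong_induction_on with
  | _ m ih =>
  apply eq_zero_of_momentWeight_smul_isLittleO (n := m)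
  refine (IsLittleO.neg_left (h.mono hm)).congr_left fun θ => ?_
  rw [sum_range_succ, sum_eq_zero fun i hi => by
    rw [ih i (mem_range.mp hi) (by have := mem_range.mp hi; omega), smul_zero]]
  simp

lemma unique (ha : HasMomentExpansion u a k) (hb : HasMomentExpansion u b k) {m : ℕ}
    (hm : m ≤ k) : a m = b m := by
  have hab := ha.sub hb
  rw [sub_self] at hab
  exact sub_eq_zero.mp (hab.coeff_eq_zero hm)

lemma bilinear (B : E →L[ℂ] F →L[ℂ] G) {v : ℝ → F} {b : ℕ → F}
    (hu : HasMomentExpansion u a k) (hv : HasMomentExpansion v b k) :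
    HasMomentExpansion (fun θ => B (u θ) (v θ))
      (fun m => ∑ ν ∈ range (m + 1), (m.choose ν : ℂ) • B (a ν) (b (m - ν))) k := by
  set pa := fun θ : ℝ => ∑ i ∈ range (k + 1), momentWeight i θ • a i
  set pb := fun θ : ℝ => ∑ j ∈ range (k + 1), momentWeight j θ • b j
  have hB := B.isBoundedBilinearMap
  have hleft : (fun θ => B (u θ - pa θ) (v θ)) =o[𝓝 0] fun θ : ℝ => |θ| ^ k :=
    hB.isBigO_comp.trans_isLittleO <|
      ((IsLittleO.norm_left hu).mul_isBigO hv.isBigO_one.norm_left).congr_right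
        fun θ => mul_one _
  have hright : (fun θ => B (pa θ) (v θ - pb θ)) =o[𝓝 0] fun θ : ℝ => |θ| ^ k :=
    hB.isBigO_comp.trans_isLittleO <|
      ((((continuous_sum_momentWeight_smul a k).tendsto 0).isBigO_one ℝ).norm_left.mul_isLittleO
        (IsLittleO.norm_left hv)).congr_right fun θ => one_mul _
  refine ((hleft.add hright).add (bilinear_sum_momentWeight_smul B a b k)).congr_left
    fun θ => ?_
  simp only [map_sub, _root_.sub_apply]
  abel

end HasMomentExpansion

end MomentExpansion

section LinftyIntegral

variable {E : Type*} [NormedAddCommGroup E] {μ : Measure S}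

lemma ae_norm_le_norm_top (h : Lp E ⊤ μ) : ∀ᵐ x ∂μ, ‖h x‖ ≤ ‖h‖ := by
  have hfin : eLpNormEssSup h μ ≠ ⊤ := by
    rw [← eLpNorm_exponent_top]
    exact Lp.eLpNorm_ne_top h
  filter_upwards [enorm_ae_le_eLpNormEssSup h μ] with x hx
  simpa [Lp.norm_def, eLpNorm_exponent_top] using ENNReal.toReal_mono hfin hx

def integralLinftyCLM [NormedSpace ℂ E] (μ : Measure S) [IsFiniteMeasure μ] :
    Lp E ⊤ μ →L[ℂ] E :=
  LinearMap.mkContinuous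
    { toFun := fun g => ∫ x, g x ∂μ
      map_add' := fun g h => by
        simp only [integral_congr_ae (Lp.coeFn_add g h)]
        exact integral_add ((Lp.memLp g).integrable le_top) ((Lp.memLp h).integrable le_top)
      map_smul' := fun c g => by
        simp only [integral_congr_ae (Lp.coeFn_smul c g)]
        exact integral_smul c _ }
    (μ.real Set.univ)
    fun g => by
      simpa [mul_comm] using norm_integral_le_of_norm_le_const (ae_norm_le_norm_top g)

lemma integralLinftyCLM_apply_of_ae_eq_const [NormedSpace ℂ E] [CompleteSpace E]
    [IsProbabilityMeasure μ] {h : Lp E ⊤ μ} {c : E}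
    (hc : ∀ᵐ x ∂μ, h x = c) : integralLinftyCLM μ h = c := by
  change ∫ x, h x ∂μ = c
  rw [integral_congr_ae hc, integral_const, probReal_univ, one_smul]

end LinftyIntegral

section Primitive

variable {𝕜 E : Type*} [Semiring 𝕜]

lemma tendsto_pow_apply_of_norm_sub_le [SeminormedAddCommGroup E] [Module 𝕜 E]
    {Q L : E →L[𝕜] E} {C γ : ℝ} (hγ : γ ∈ Set.Ico (0 : ℝ) 1)
    (h : ∀ (g : E) (n : ℕ), 1 ≤ n → ‖(Q ^ n) g - L g‖ ≤ C * γ ^ n * ‖g‖) (g : E) :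
    Tendsto (fun n => (Q ^ n) g) atTop (𝓝 (L g)) := by
  rw [tendsto_iff_norm_sub_tendsto_zero]
  refine squeeze_zero' (Eventually.of_forall fun n => norm_nonneg _)
    ((eventually_ge_atTop 1).mono fun n hn => h g n hn) ?_
  simpa using ((tendsto_pow_atTop_nhds_zero_of_lt_one hγ.1 hγ.2).const_mul C).mul_const ‖g‖

lemma apply_apply_eq_of_tendsto_pow_apply [TopologicalSpace E] [T2Space E] [AddCommMonoid E]
    [Module 𝕜 E] {Q L : E →L[𝕜] E} (h : ∀ g, Tendsto (fun n => (Q ^ n) g) atTop (𝓝 (L g)))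
    (g : E) : L (Q g) = L g :=
  tendsto_nhds_unique (h (Q g)) <| by
    simpa only [Function.comp_def, pow_succ, mul_apply_eq_comp] using
      (h g).comp (tendsto_add_atTop_nat 1)

end Primitive

section Sums

variable {M : Type*} [AddCommMonoid M]

lemma sum_range_succ_eq_add_sum_Icc_one (u : ℕ → M) (m : ℕ) :
    ∑ ν ∈ range (m + 1), u ν = u 0 + ∑ ν ∈ Icc 1 m, u ν := by
  rw [range_eq_Ico, sum_eq_sum_Ico_succ_bot (by omega : 0 < m + 1), zero_add,
    Ico_add_one_right_eq_Icc]

lemma sum_range_succ_eq_add_add_sum_Icc {u : ℕ → M} {m : ℕ} (hm : 2 ≤ m) (h1 : u 1 = 0)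
    (hm1 : u (m - 1) = 0) :
    ∑ ν ∈ range (m + 1), u ν = u 0 + u m + ∑ ν ∈ Icc 2 (m - 2), u ν := by
  have hsub : insert 0 (insert m (Icc 2 (m - 2))) ⊆ range (m + 1) := by
    intro ν hν
    simp only [mem_insert, mem_Icc, mem_range] at hν ⊢
    omega
  rw [← sum_subset hsub fun ν hν hν' => ?_, sum_insert (by simp; omega),
    sum_insert (by simp; omega), add_assoc]
  simp only [mem_insert, mem_Icc, mem_range, not_or, not_and_or, not_le] at hν hν'
  obtain rfl | rfl : ν = 1 ∨ ν = m - 1 := by omega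
  exacts [h1, hm1]

lemma eq_sub_of_sum_choose_mul_eq {R : Type*} [CommRing R] {m : ℕ} (hm : 2 ≤ m)
    {l lh w : ℕ → R} (hl0 : l 0 = 1) (hl1 : l 1 = 0) (hlh0 : lh 0 = 1) (hlh1 : lh 1 = 0)
    (hw0 : w 0 = lh m)
    (h : ∑ ν ∈ range (m + 1), (m.choose ν : R) * w ν =
      ∑ ν ∈ range (m + 1), (m.choose ν : R) * (l ν * lh (m - ν))) :
    l m = ∑ ν ∈ Icc 1 m, (m.choose ν : R) * w ν -
      ∑ ν ∈ Icc 2 (m - 2), (m.choose ν : R) * l ν * lh (m - ν) := by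
  rw [sum_range_succ_eq_add_sum_Icc_one, sum_range_succ_eq_add_add_sum_Icc hm (by simp [hl1])
    (by simp [Nat.sub_sub_self (by omega : 1 ≤ m), hlh1])] at h
  simp only [Nat.choose_zero_right, Nat.choose_self, Nat.sub_zero, Nat.sub_self, Nat.cast_one,
    one_mul, mul_one, hw0, hl0, hlh0] at h
  simp only [mul_assoc]
  linear_combination -h

end Sums

theorem eigenvalue_coefficients_recursion_general
    {S : Type*} [MeasurableSpace S] (μ : Measure S) [IsProbabilityMeasure μ]
    (P : Kernel S S) (f : S → ℝ)
    (π : Measure S)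
    (Pop Pi : Lp ℂ ⊤ μ →L[ℂ] Lp ℂ ⊤ μ)
    (hPop : ∀ g : Lp ℂ ⊤ μ, ∀ᵐ x ∂μ, Pop g x = ∫ y, g y ∂(P x))
    (hPi : ∀ g : Lp ℂ ⊤ μ, ∀ᵐ x ∂μ, Pi g x = ∫ y, g y ∂π)
    (Phat : ℝ → (Lp ℂ ⊤ μ →L[ℂ] Lp ℂ ⊤ μ))
    -- primitivity of P
    (C γ : ℝ) (hγ : γ ∈ Set.Ico (0 : ℝ) 1)
    (hprim : ∀ (g : Lp ℂ ⊤ μ) (n : ℕ), 1 ≤ n →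
      ‖(Pop ^ n) g - Pi g‖ ≤ C * γ ^ n * ‖g‖)
    -- MacLaurin expansion of the characteristic operator, with bounded P^{(m)}
    (k : ℕ)
    (Pm : ℕ → (Lp ℂ ⊤ μ →L[ℂ] Lp ℂ ⊤ μ))
    (hPm : ∀ m : ℕ, m ≤ k → ∀ g : Lp ℂ ⊤ μ, ∀ᵐ x ∂μ,
      Pm m g x = ∫ y, (f y : ℂ) ^ m * g y ∂(P x))
    (hexp : (fun θ : ℝ =>
        Phat θ - ∑ m ∈ Finset.range (k + 1),
          (((Complex.I * θ) ^ m / (m.factorial : ℂ)) • Pm m))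
      =o[𝓝 0] fun θ : ℝ => |θ| ^ k)
    -- principal eigenvalue and eigenprojection near θ = 0
    (lam : ℝ → ℂ) (P1 : ℝ → (Lp ℂ ⊤ μ →L[ℂ] Lp ℂ ⊤ μ))
    (ε₀ : ℝ) (hε₀ : 0 < ε₀)
    (heig : ∀ θ : ℝ, |θ| < ε₀ → Phat θ ∘L P1 θ = lam θ • P1 θ)
    -- expansion coefficients λ^{(m)} of λ(θ) and P̂₁^{(m)} of P̂₁(θ)
    (lamC : ℕ → ℂ) (P1m : ℕ → (Lp ℂ ⊤ μ →L[ℂ] Lp ℂ ⊤ μ))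
    (hlamexp : (fun θ : ℝ =>
        lam θ - ∑ m ∈ Finset.range (k + 1), (Complex.I * θ) ^ m / (m.factorial : ℂ) * lamC m)
      =o[𝓝 0] fun θ : ℝ => |θ| ^ k)
    (hP1exp : (fun θ : ℝ =>
        P1 θ - ∑ m ∈ Finset.range (k + 1),
          (((Complex.I * θ) ^ m / (m.factorial : ℂ)) • P1m m))
      =o[𝓝 0] fun θ : ℝ => |θ| ^ k)
    -- normalizations λ^{(0)} = λ̂^{(0)} = 1, λ^{(1)} = λ̂^{(1)} = 0
    (hl0 : lamC 0 = 1) (hl1 : lamC 1 = 0)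
    (hlh0 : (∫ x, (P1m 0) (oneL μ) x ∂π) = 1)
    (hlh1 : (∫ x, (P1m 1) (oneL μ) x ∂π) = 0) :
    ∀ m : ℕ, 2 ≤ m → m ≤ k →
      lamC m =
        (∑ ν ∈ Finset.Icc 1 m,
            (m.choose ν : ℂ) * ∫ x, (Pm ν) ((P1m (m - ν)) (oneL μ)) x ∂π)
        - ∑ ν ∈ Finset.Icc 2 (m - 2),
            (m.choose ν : ℂ) * lamC ν * ∫ x, (P1m (m - ν)) (oneL μ) x ∂π := by
  intro m hm2 hmk
  -- `π(g)`, realised as `∫ Π g dμ` so as to be continuous on `L^∞(μ)`.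
  set T : Lp ℂ ⊤ μ →L[ℂ] ℂ := (integralLinftyCLM μ).comp Pi
  have hT (g : Lp ℂ ⊤ μ) : T g = ∫ x, g x ∂π := integralLinftyCLM_apply_of_ae_eq_const (hPi g)
  have hTPm0 (g : Lp ℂ ⊤ μ) : T (Pm 0 g) = T g := by
    have hPm0 : Pm 0 g = Pop g := Lp.ext <| by
      filter_upwards [hPm 0 k.zero_le g, hPop g] with x h0 h1
      simp [h0, h1]
    simp only [T, ContinuousLinearMap.comp_apply, hPm0,
      apply_apply_eq_of_tendsto_pow_apply (tendsto_pow_apply_of_norm_sub_le hγ hprim)]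
  have hexpPhat : HasMomentExpansion Phat Pm k := hexp
  have hexpP1 : HasMomentExpansion P1 P1m k := hP1exp
  have hexpLam : HasMomentExpansion lam lamC k := hlamexp
  have hP1one : HasMomentExpansion (fun θ => P1 θ (oneL μ)) (fun m => P1m m (oneL μ)) k := by
    simpa only [ContinuousLinearMap.apply_apply] using
      hexpP1.map (ContinuousLinearMap.apply ℂ (Lp ℂ ⊤ μ) (oneL μ))
  have hleft := (hexpPhat.bilinear (ContinuousLinearMap.id ℂ _) hP1one).map T
  have hright := hexpLam.bilinear (ContinuousLinearMap.mul ℂ ℂ) (hP1one.map T)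
  have heig' : (fun θ => T (Phat θ (P1 θ (oneL μ)))) =ᶠ[𝓝 0]
      fun θ => lam θ * T (P1 θ (oneL μ)) := by
    filter_upwards [eventually_abs_sub_lt 0 hε₀] with θ hθ
    rw [sub_zero] at hθ
    rw [← ContinuousLinearMap.comp_apply (Phat θ), heig θ hθ]
    simp
  have hcoeff := (hleft.congr_of_eventuallyEq heig').unique hright hmk
  simp only [map_sum, map_smul, ContinuousLinearMap.id_apply, ContinuousLinearMap.mul_apply',
    smul_eq_mul] at hcoeff
  simp only [← hT]
  exact eq_sub_of_sum_choose_mul_eq (w := fun ν => T (Pm ν (P1m (m - ν) (oneL μ))))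
    (lh := fun j => T (P1m j (oneL μ))) hm2 hl0 hl1 ((hT _).trans hlh0) ((hT _).trans hlh1)
    (hTPm0 _) hcoeff

/-- recursion for the coefficients λ^{(m)} of the principal eigenvalue:
λ^{(m)} = Σ_{ν=1}^m C(m,ν) π(P^{(ν)} P̂₁^{(m−ν)} 𝟙) − Σ_{ν=2}^{m−2} C(m,ν) λ^{(ν)} λ̂^{(m−ν)}. -/
theorem eigenvalue_coefficients_recursion
    {S : Type*} [MeasurableSpace S] (μ : Measure S) [IsProbabilityMeasure μ]
    (P : Kernel S S) [IsMarkovKernel P] (f : S → ℝ) (hf : Measurable f)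
    (π : Measure S) [IsProbabilityMeasure π] (hπ : Stationary P π)
    (Pop Pi : Lp ℂ ⊤ μ →L[ℂ] Lp ℂ ⊤ μ)
    (hPop : ∀ g : Lp ℂ ⊤ μ, ∀ᵐ x ∂μ, Pop g x = ∫ y, g y ∂(P x))
    (hPi : ∀ g : Lp ℂ ⊤ μ, ∀ᵐ x ∂μ, Pi g x = ∫ y, g y ∂π)
    (Phat : ℝ → (Lp ℂ ⊤ μ →L[ℂ] Lp ℂ ⊤ μ))
    (hPhat : ∀ (θ : ℝ) (g : Lp ℂ ⊤ μ), ∀ᵐ x ∂μ,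
      Phat θ g x = ∫ y, Complex.exp (Complex.I * θ * f y) * g y ∂(P x))
    -- primitivity of P
    (C γ : ℝ) (hC : 0 < C) (hγ : γ ∈ Set.Ico (0 : ℝ) 1)
    (hprim : ∀ (g : Lp ℂ ⊤ μ) (n : ℕ), 1 ≤ n →
      ‖(Pop ^ n) g - Pi g‖ ≤ C * γ ^ n * ‖g‖)
    -- MacLaurin expansion of the characteristic operator, with bounded P^{(m)}
    (k : ℕ)
    (Pm : ℕ → (Lp ℂ ⊤ μ →L[ℂ] Lp ℂ ⊤ μ))
    (hPm : ∀ m : ℕ, m ≤ k → ∀ g : Lp ℂ ⊤ μ, ∀ᵐ x ∂μ,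
      Pm m g x = ∫ y, (f y : ℂ) ^ m * g y ∂(P x))
    (hexp : (fun θ : ℝ =>
        Phat θ - ∑ m ∈ Finset.range (k + 1),
          (((Complex.I * θ) ^ m / (m.factorial : ℂ)) • Pm m))
      =o[𝓝 0] fun θ : ℝ => |θ| ^ k)
    -- principal eigenvalue and eigenprojection near θ = 0
    (lam : ℝ → ℂ) (P1 : ℝ → (Lp ℂ ⊤ μ →L[ℂ] Lp ℂ ⊤ μ))
    (ε₀ : ℝ) (hε₀ : 0 < ε₀)
    (hproj : ∀ θ : ℝ, |θ| < ε₀ → P1 θ ∘L P1 θ = P1 θ)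
    (hcomm : ∀ θ : ℝ, |θ| < ε₀ → Phat θ ∘L P1 θ = P1 θ ∘L Phat θ)
    (heig : ∀ θ : ℝ, |θ| < ε₀ → Phat θ ∘L P1 θ = lam θ • P1 θ)
    (hlam0 : lam 0 = 1) (hP10 : P1 0 = Pi)
    (hP1cont : Tendsto (fun θ : ℝ => ‖P1 θ - Pi‖) (𝓝 0) (𝓝 0))
    -- expansion coefficients λ^{(m)} of λ(θ) and P̂₁^{(m)} of P̂₁(θ)
    (lamC : ℕ → ℂ) (P1m : ℕ → (Lp ℂ ⊤ μ →L[ℂ] Lp ℂ ⊤ μ))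
    (hlamexp : (fun θ : ℝ =>
        lam θ - ∑ m ∈ Finset.range (k + 1), (Complex.I * θ) ^ m / (m.factorial : ℂ) * lamC m)
      =o[𝓝 0] fun θ : ℝ => |θ| ^ k)
    (hP1exp : (fun θ : ℝ =>
        P1 θ - ∑ m ∈ Finset.range (k + 1),
          (((Complex.I * θ) ^ m / (m.factorial : ℂ)) • P1m m))
      =o[𝓝 0] fun θ : ℝ => |θ| ^ k)
    -- normalizations λ^{(0)} = λ̂^{(0)} = 1, λ^{(1)} = λ̂^{(1)} = 0
    (hl0 : lamC 0 = 1) (hl1 : lamC 1 = 0)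
    (hlh0 : (∫ x, (P1m 0) (oneL μ) x ∂π) = 1)
    (hlh1 : (∫ x, (P1m 1) (oneL μ) x ∂π) = 0) :
    ∀ m : ℕ, 2 ≤ m → m ≤ k →
      lamC m =
        (∑ ν ∈ Finset.Icc 1 m,
            (m.choose ν : ℂ) * ∫ x, (Pm ν) ((P1m (m - ν)) (oneL μ)) x ∂π)
        - ∑ ν ∈ Finset.Icc 2 (m - 2),
            (m.choose ν : ℂ) * lamC ν * ∫ x, (P1m (m - ν)) (oneL μ) x ∂π :=
  eigenvalue_coefficients_recursion_general μ P f π Pop Pi hPop hPi Phat C γ hγ hprim k Pm hPm hexp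
    lam P1 ε₀ hε₀ heig lamC P1m hlamexp hP1exp hl0 hl1 hlh0 hlh1
end Edgeworth
end
end
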